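/- arXiv:2405.15010 — 4 statements merged into one kernel-verified Lean document; each statement's English description precedes it below -/
import Mathlib

section
/- Let f : ℝ^d → ℝ be differentiable, convex, and (L0, L1)-smooth with L0 > 0, L1 > 0, and suppose f attains its minimum at x* with f* = f(x*). Then for every x ∈ ℝ^d with ∇f(x) ≠ 0, min{ 1/(4 L0), 1/(4 L1 ‖∇f(x)‖) } ≤ (f(x) − f*) / ‖∇f(x)‖². -/
/-!
On the ball of radius `1 / L1` around `x`, `(L0, L1)`-smoothness bounds `‖∇f y - ∇f x‖` by
`L ‖y - x‖` with `L = L0 + L1 ‖∇f x‖`, and the one-dimensional descent argument along a segment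
only needs this bound at the centre. Hence a gradient step of length `t` with
`t ‖∇f x‖ ≤ 1 / L1` lowers `f` by at least `t (1 - L t / 2) ‖∇f x‖²`. Taking `t = 2 m`, with `m` the
claimed minimum, gives `L t ≤ 1` and `t ‖∇f x‖ ≤ 1 / (2 L1)`, so `f x - f* ≥ m ‖∇f x‖²`.
-/

open Set Metric
open scoped Gradient InnerProductSpace

section Descent

variable {E : Type*} [NormedAddCommGroup E] [InnerProductSpace ℝ E] [CompleteSpace E]
  {f : E → ℝ}

theorem HasGradientAt.hasDerivAt_add_smul {g x v : E} {s : ℝ}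
    (h : HasGradientAt f g (x + s • v)) :
    HasDerivAt (fun s : ℝ => f (x + s • v)) ⟪g, v⟫_ℝ s := by
  have hline : HasDerivAt (fun s : ℝ => x + s • v) v s := by
    simpa using ((hasDerivAt_id s).smul_const v).const_add x
  exact (h.hasFDerivAt.comp_hasDerivAt s hline).congr_deriv (by simp)

theorem le_add_inner_gradient_add_of_norm_gradient_sub_le {x v : E} {L : ℝ}
    (hf : ∀ y ∈ closedBall x ‖v‖, DifferentiableAt ℝ f y)
    (hL : ∀ y ∈ closedBall x ‖v‖, ‖∇ f y - ∇ f x‖ ≤ L * ‖y - x‖) :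
    f (x + v) ≤ f x + ⟪∇ f x, v⟫_ℝ + L / 2 * ‖v‖ ^ 2 := by
  have hdist : ∀ s ∈ Icc (0 : ℝ) 1, ‖x + s • v - x‖ = s * ‖v‖ := fun s hs => by
    rw [add_sub_cancel_left, norm_smul, Real.norm_of_nonneg hs.1]
  have hmem : ∀ s ∈ Icc (0 : ℝ) 1, x + s • v ∈ closedBall x ‖v‖ := fun s hs => by
    rw [mem_closedBall, dist_eq_norm, hdist s hs]
    exact mul_le_of_le_one_left (norm_nonneg v) hs.2
  have hφ : ∀ s ∈ Icc (0 : ℝ) 1,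
      HasDerivAt (fun s : ℝ => f (x + s • v)) ⟪∇ f (x + s • v), v⟫_ℝ s := fun s hs =>
    (hf _ (hmem s hs)).hasGradientAt.hasDerivAt_add_smul
  have hB : ∀ s : ℝ, HasDerivAt (fun s : ℝ => f x + s * ⟪∇ f x, v⟫_ℝ + L / 2 * ‖v‖ ^ 2 * s ^ 2)
      (⟪∇ f x, v⟫_ℝ + L * ‖v‖ ^ 2 * s) s := fun s => by
    refine ((((hasDerivAt_id' s).mul_const ⟪∇ f x, v⟫_ℝ).const_add (f x)).fun_add
      ((hasDerivAt_pow 2 s).const_mul (L / 2 * ‖v‖ ^ 2))).congr_deriv ?_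
    push_cast; ring
  have hbound : ∀ s ∈ Icc (0 : ℝ) 1,
      ⟪∇ f (x + s • v), v⟫_ℝ ≤ ⟪∇ f x, v⟫_ℝ + L * ‖v‖ ^ 2 * s := fun s hs =>
    calc ⟪∇ f (x + s • v), v⟫_ℝ = ⟪∇ f x, v⟫_ℝ + ⟪∇ f (x + s • v) - ∇ f x, v⟫_ℝ := by
          rw [inner_sub_left]; ring
      _ ≤ ⟪∇ f x, v⟫_ℝ + ‖∇ f (x + s • v) - ∇ f x‖ * ‖v‖ := by
          gcongr; exact real_inner_le_norm _ _
      _ ≤ ⟪∇ f x, v⟫_ℝ + L * (s * ‖v‖) * ‖v‖ := by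
          gcongr; exact hdist s hs ▸ hL _ (hmem s hs)
      _ = ⟪∇ f x, v⟫_ℝ + L * ‖v‖ ^ 2 * s := by ring
  have := image_le_of_deriv_right_le_deriv_boundary
    (fun s hs => (hφ s hs).continuousAt.continuousWithinAt)
    (fun s hs => (hφ s (Ico_subset_Icc_self hs)).hasDerivWithinAt) (by simp)
    (fun s _ => (hB s).continuousAt.continuousWithinAt) (fun s _ => (hB s).hasDerivWithinAt)
    (fun s hs => hbound s (Ico_subset_Icc_self hs)) (right_mem_Icc.2 zero_le_one)
  simpa using this

theorem image_sub_smul_gradient_le {x : E} {t L : ℝ} (ht : 0 ≤ t)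
    (hf : ∀ y ∈ closedBall x (t * ‖∇ f x‖), DifferentiableAt ℝ f y)
    (hL : ∀ y ∈ closedBall x (t * ‖∇ f x‖), ‖∇ f y - ∇ f x‖ ≤ L * ‖y - x‖) :
    f (x - t • ∇ f x) ≤ f x - t * (1 - L * t / 2) * ‖∇ f x‖ ^ 2 := by
  have hnorm : ‖-(t • ∇ f x)‖ = t * ‖∇ f x‖ := by
    rw [norm_neg, norm_smul, Real.norm_of_nonneg ht]
  have := le_add_inner_gradient_add_of_norm_gradient_sub_le (v := -(t • ∇ f x))
    (hnorm ▸ hf) (hnorm ▸ hL)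
  rw [← sub_eq_add_neg, hnorm, inner_neg_right, real_inner_smul_right,
    real_inner_self_eq_norm_sq] at this
  linarith

end Descent

theorem polyak_stepsize_lower_bound_generalized_smooth_general {d : ℕ}
    (f : EuclideanSpace ℝ (Fin d) → ℝ) (L0 L1 : ℝ)
    (hL0 : 0 < L0) (hL1 : 0 < L1)
    (hdiff : Differentiable ℝ f)
    (hsmooth : ∀ x y : EuclideanSpace ℝ (Fin d), ‖x - y‖ ≤ 1 / L1 →
      ‖gradient f x - gradient f y‖ ≤ (L0 + L1 * ‖gradient f x‖) * ‖x - y‖)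
    (xstar : EuclideanSpace ℝ (Fin d)) (hmin : ∀ y, f xstar ≤ f y)
    (x : EuclideanSpace ℝ (Fin d)) (hgrad : gradient f x ≠ 0) :
    min (1 / (4 * L0)) (1 / (4 * L1 * ‖gradient f x‖)) ≤
      (f x - f xstar) / ‖gradient f x‖ ^ 2 := by
  set G := ‖∇ f x‖
  set m := min (1 / (4 * L0)) (1 / (4 * L1 * G))
  have hG : 0 < G := norm_pos_iff.2 hgrad
  have hm : 0 < m := lt_min (by positivity) (by positivity)
  have hmL0 : m * (4 * L0) ≤ 1 := (le_div_iff₀ (by positivity)).1 (min_le_left _ _)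
  have hmL1 : m * (4 * L1 * G) ≤ 1 := (le_div_iff₀ (by positivity)).1 (min_le_right _ _)
  have hstep : 2 * m * G ≤ 1 / L1 := by
    rw [le_div_iff₀ hL1]; linarith
  have hdescent :
      f (x - (2 * m) • ∇ f x) ≤ f x - 2 * m * (1 - (L0 + L1 * G) * (2 * m) / 2) * G ^ 2 :=
    image_sub_smul_gradient_le (by positivity) (fun y _ => hdiff y) fun y hy => by
      rw [norm_sub_rev (∇ f y), norm_sub_rev y]
      exact hsmooth x y (by rw [← dist_eq_norm, dist_comm]; exact hy.out.trans hstep)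
  rw [le_div_iff₀ (by positivity)]
  calc m * G ^ 2 ≤ 2 * m * (1 - (L0 + L1 * G) * (2 * m) / 2) * G ^ 2 := by gcongr; nlinarith
    _ ≤ f x - f xstar := by linarith [hmin (x - (2 * m) • ∇ f x)]

/-- Lower bound on the Polyak stepsize under (L0, L1)-smoothness:
`min{1/(4L0), 1/(4L1‖∇f(x)‖)} ≤ (f(x) − f*)/‖∇f(x)‖²`. -/
theorem polyak_stepsize_lower_bound_generalized_smooth {d : ℕ}
    (f : EuclideanSpace ℝ (Fin d) → ℝ) (L0 L1 : ℝ)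
    (hL0 : 0 < L0) (hL1 : 0 < L1)
    (hdiff : Differentiable ℝ f)
    (hconv : ConvexOn ℝ Set.univ f)
    (hsmooth : ∀ x y : EuclideanSpace ℝ (Fin d), ‖x - y‖ ≤ 1 / L1 →
      ‖gradient f x - gradient f y‖ ≤ (L0 + L1 * ‖gradient f x‖) * ‖x - y‖)
    (xstar : EuclideanSpace ℝ (Fin d)) (hmin : ∀ y, f xstar ≤ f y)
    (x : EuclideanSpace ℝ (Fin d)) (hgrad : gradient f x ≠ 0) :
    min (1 / (4 * L0)) (1 / (4 * L1 * ‖gradient f x‖)) ≤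
      (f x - f xstar) / ‖gradient f x‖ ^ 2 :=
  polyak_stepsize_lower_bound_generalized_smooth_general f L0 L1 hL0 hL1 hdiff hsmooth xstar hmin x
    hgrad
end

section
/- Let f : ℝ^d → ℝ be differentiable, convex, and (L0, L1)-smooth with L0 > 0, L1 > 0, and suppose f attains its minimum at x* with f* = f(x*). Let x_t ∈ ℝ^d satisfy ∇f(x_t) ≠ 0 and ‖∇f(x_t)‖ ≤ L0/L1, and let x_{t+1} = x_t − η_t ∇f(x_t) with Polyak stepsize η_t = (f(x_t) − f*)/‖∇f(x_t)‖². Then ‖x_{t+1} − x*‖² ≤ ‖x_t − x*‖² − (f(x_t) − f*)/(4 L0). -/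
/-!
Convexity gives `f xₜ - f* ≤ ⟪∇f xₜ, xₜ - x*⟫`, so the Polyak step shrinks `‖xₜ - x*‖²` by at least
`(f xₜ - f*)² / ‖∇f xₜ‖²`. Along a segment of length at most `1 / L1`, `(L0, L1)`-smoothness gives
the descent inequality `f (x + v) ≤ f x + ⟪∇f x, v⟫ + (L0 + L1 ‖∇f x‖) / 2 ‖v‖²`; the step
`v = -∇f x / (L0 + L1 ‖∇f x‖)` then yields `‖∇f x‖² ≤ 2 (L0 + L1 ‖∇f x‖) (f x - f*)`, which is at
most `4 L0 (f x - f*)` when `‖∇f x‖ ≤ L0 / L1`. Combining the two bounds gives the claim.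
-/

open InnerProductSpace Set

section

variable {E : Type*} [NormedAddCommGroup E] [InnerProductSpace ℝ E]

theorem norm_sub_div_norm_sq_smul_sq_le {u g : E} {e : ℝ} (he : 0 ≤ e)
    (hinner : e ≤ inner ℝ g u) :
    ‖u - (e / ‖g‖ ^ 2) • g‖ ^ 2 ≤ ‖u‖ ^ 2 - e ^ 2 / ‖g‖ ^ 2 := by
  have hcoef : (e / ‖g‖ ^ 2) ^ 2 * ‖g‖ ^ 2 = e ^ 2 / ‖g‖ ^ 2 := by
    rcases eq_or_ne ‖g‖ 0 with hg | hg
    · simp [hg]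
    · field_simp
  have hcross : e ^ 2 / ‖g‖ ^ 2 ≤ e / ‖g‖ ^ 2 * inner ℝ u g := by
    rw [real_inner_comm, sq, mul_div_right_comm]
    exact mul_le_mul_of_nonneg_left hinner (by positivity)
  rw [norm_sub_sq_real, real_inner_smul_right, norm_smul, mul_pow, Real.norm_eq_abs, sq_abs,
    hcoef]
  linarith

variable [CompleteSpace E] {f : E → ℝ}

theorem hasDerivAt_comp_add_smul {x v : E} {t : ℝ} (hf : DifferentiableAt ℝ f (x + t • v)) :
    HasDerivAt (fun s : ℝ => f (x + s • v)) (inner ℝ (gradient f (x + t • v)) v) t := by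
  have hline : HasDerivAt (fun s : ℝ => x + s • v) v t := by
    simpa using ((hasDerivAt_id t).smul_const v).const_add x
  simpa [Function.comp_def, toDual_apply_apply] using
    hf.hasGradientAt.hasFDerivAt.comp_hasDerivAt t hline

theorem ConvexOn.inner_gradient_le_sub (hconv : ConvexOn ℝ univ f) (hf : Differentiable ℝ f)
    (x y : E) : inner ℝ (gradient f x) (y - x) ≤ f y - f x := by
  have hline : ConvexOn ℝ univ (fun t : ℝ => f (x + t • (y - x))) := by
    simpa [Function.comp_def, AffineMap.lineMap_apply_module', add_comm] using
      hconv.comp_affineMap (AffineMap.lineMap x y)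
  have hderiv := hasDerivAt_comp_add_smul (t := 0) (hf (x + (0 : ℝ) • (y - x)))
  rw [zero_smul, add_zero] at hderiv
  simpa [slope_def_field] using
    hline.le_slope_of_hasDerivAt (mem_univ 0) (mem_univ 1) one_pos hderiv

def IsL0L1Smooth (f : E → ℝ) (L0 L1 : ℝ) : Prop :=
  ∀ x y, ‖x - y‖ ≤ 1 / L1 → ‖gradient f x - gradient f y‖ ≤ (L0 + L1 * ‖gradient f x‖) * ‖x - y‖

namespace IsL0L1Smooth

variable {L0 L1 : ℝ}

theorem le_add_inner_add_sq (hs : IsL0L1Smooth f L0 L1) (hf : Differentiable ℝ f) {x v : E}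
    (hv : ‖v‖ ≤ 1 / L1) :
    f (x + v) ≤ f x + inner ℝ (gradient f x) v + (L0 + L1 * ‖gradient f x‖) / 2 * ‖v‖ ^ 2 := by
  set g := gradient f x
  set L := L0 + L1 * ‖g‖
  -- `f` minus its quadratic upper model along the segment is antitone on `[0, 1]`
  set φ : ℝ → ℝ := fun t => f (x + t • v) - t * inner ℝ g v - L / 2 * t ^ 2 * ‖v‖ ^ 2
  set φ' : ℝ → ℝ := fun t => inner ℝ (gradient f (x + t • v) - g) v - L * t * ‖v‖ ^ 2
  have hφ : ∀ t, HasDerivAt φ (φ' t) t := fun t => by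
    refine (((hasDerivAt_comp_add_smul (x := x) (v := v) (hf _)).sub
      ((hasDerivAt_id t).mul_const (inner ℝ g v))).sub
      (((hasDerivAt_pow 2 t).const_mul (L / 2)).mul_const (‖v‖ ^ 2))).congr_deriv ?_
    simp only [φ', inner_sub_left]
    ring
  have hφ'_nonpos : ∀ t ∈ Icc (0 : ℝ) 1, φ' t ≤ 0 := fun t ⟨ht0, ht1⟩ => by
    have hdist : ‖x - (x + t • v)‖ = t * ‖v‖ := by
      rw [sub_add_cancel_left, norm_neg, norm_smul, Real.norm_of_nonneg ht0]
    have hclose : ‖x - (x + t • v)‖ ≤ 1 / L1 := by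
      rw [hdist]
      exact (mul_le_of_le_one_left (norm_nonneg v) ht1).trans hv
    have hlip := hs x _ hclose
    rw [hdist, norm_sub_rev] at hlip
    refine sub_nonpos.2 ?_
    calc inner ℝ (gradient f (x + t • v) - g) v
        ≤ ‖gradient f (x + t • v) - g‖ * ‖v‖ := real_inner_le_norm _ _
      _ ≤ L * (t * ‖v‖) * ‖v‖ := by gcongr
      _ = L * t * ‖v‖ ^ 2 := by ring
  have hanti : AntitoneOn φ (Icc 0 1) :=
    antitoneOn_of_hasDerivWithinAt_nonpos (convex_Icc 0 1)
      (fun t _ => (hφ t).continuousAt.continuousWithinAt)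
      (fun t _ => (hφ t).hasDerivWithinAt)
      (fun t ht => hφ'_nonpos t (interior_subset ht))
  have := hanti (left_mem_Icc.2 zero_le_one) (right_mem_Icc.2 zero_le_one) zero_le_one
  simp only [φ, one_smul, zero_smul, add_zero] at this
  linarith

theorem sq_norm_gradient_div_le_sub (hs : IsL0L1Smooth f L0 L1) (hf : Differentiable ℝ f)
    (hL0 : 0 < L0) (hL1 : 0 < L1) {xstar : E} (hmin : ∀ y, f xstar ≤ f y) (x : E) :
    ‖gradient f x‖ ^ 2 / (2 * (L0 + L1 * ‖gradient f x‖)) ≤ f x - f xstar := by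
  set g := gradient f x
  set L := L0 + L1 * ‖g‖
  have hL : 0 < L := by positivity
  have hv : ‖-(1 / L) • g‖ = ‖g‖ / L := by
    rw [norm_smul, norm_neg, Real.norm_of_nonneg (by positivity), one_div_mul_eq_div]
  have hdescent := hs.le_add_inner_add_sq hf (x := x) (v := -(1 / L) • g) <| by
    rw [hv, div_le_div_iff₀ hL hL1]
    linarith
  rw [hv, inner_smul_right, real_inner_self_eq_norm_sq] at hdescent
  have hmodel : -(1 / L) * ‖g‖ ^ 2 + L / 2 * (‖g‖ / L) ^ 2 = -(‖g‖ ^ 2 / (2 * L)) := by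
    field_simp
    ring
  linarith [hmin (x + -(1 / L) • g)]

end IsL0L1Smooth

end

/-- One step of gradient descent with Polyak stepsize, in the small-gradient
regime `‖∇f(x_t)‖ ≤ L0/L1`, decreases the squared distance to the optimum by at least
`(f(x_t) − f*)/(4L0)`. -/
theorem polyak_step_small_gradient_case {d : ℕ}
    (f : EuclideanSpace ℝ (Fin d) → ℝ) (L0 L1 : ℝ)
    (hL0 : 0 < L0) (hL1 : 0 < L1)
    (hdiff : Differentiable ℝ f)
    (hconv : ConvexOn ℝ Set.univ f)
    (hsmooth : ∀ x y : EuclideanSpace ℝ (Fin d), ‖x - y‖ ≤ 1 / L1 →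
      ‖gradient f x - gradient f y‖ ≤ (L0 + L1 * ‖gradient f x‖) * ‖x - y‖)
    (xstar : EuclideanSpace ℝ (Fin d)) (hmin : ∀ y, f xstar ≤ f y)
    (xt xt1 : EuclideanSpace ℝ (Fin d))
    (hgrad : gradient f xt ≠ 0)
    (hsmall : ‖gradient f xt‖ ≤ L0 / L1)
    (η : ℝ) (hη : η = (f xt - f xstar) / ‖gradient f xt‖ ^ 2)
    (hstep : xt1 = xt - η • gradient f xt) :
    ‖xt1 - xstar‖ ^ 2 ≤ ‖xt - xstar‖ ^ 2 - (f xt - f xstar) / (4 * L0) := by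
  set g := gradient f xt
  set e := f xt - f xstar
  have hg : 0 < ‖g‖ ^ 2 := by positivity
  have hL1g : L1 * ‖g‖ ≤ L0 := by rwa [le_div_iff₀' hL1] at hsmall
  have hgap : ‖g‖ ^ 2 / (4 * L0) ≤ e :=
    calc ‖g‖ ^ 2 / (4 * L0) ≤ ‖g‖ ^ 2 / (2 * (L0 + L1 * ‖g‖)) :=
          div_le_div_of_nonneg_left hg.le (by positivity) (by linarith)
      _ ≤ e := IsL0L1Smooth.sq_norm_gradient_div_le_sub hsmooth hdiff hL0 hL1 hmin xt
  have hinner : e ≤ inner ℝ g (xt - xstar) := by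
    have := hconv.inner_gradient_le_sub hdiff xt xstar
    rw [← neg_sub, inner_neg_right] at this
    linarith
  have he : 0 ≤ e := sub_nonneg.2 (hmin xt)
  have hdecrease : e / (4 * L0) ≤ e ^ 2 / ‖g‖ ^ 2 := by
    rw [le_div_iff₀ hg]
    calc e / (4 * L0) * ‖g‖ ^ 2 = e * (‖g‖ ^ 2 / (4 * L0)) := by ring
      _ ≤ e * e := mul_le_mul_of_nonneg_left hgap he
      _ = e ^ 2 := (sq e).symm
  calc ‖xt1 - xstar‖ ^ 2 = ‖(xt - xstar) - η • g‖ ^ 2 := by rw [hstep, sub_right_comm]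
    _ ≤ ‖xt - xstar‖ ^ 2 - e ^ 2 / ‖g‖ ^ 2 := hη ▸ norm_sub_div_norm_sq_smul_sq_le he hinner
    _ ≤ ‖xt - xstar‖ ^ 2 - e / (4 * L0) := by linarith
end

section
/- Let f : ℝ^d → ℝ be differentiable and convex, and suppose f attains its minimum at x* with f* = f(x*). Let l* ≤ f* and σ² = f* − l*. Let T ≥ 1, let x_t ∈ ℝ^d with ∇f(x_t) ≠ 0, and let x_{t+1} = x_t − η_t ∇f(x_t) with η_t = (f(x_t) − l*)/(√T · ‖∇f(x_t)‖²). Then ‖x_{t+1} − x*‖² ≤ ‖x_t − x*‖² − η_t (f(x_t) − f*) + η_t σ² / √T. -/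
/-!
Expanding the square gives `‖x_{t+1} − x*‖² = ‖x_t − x*‖² − 2η⟪∇f(x_t), x_t − x*⟫ + η²‖∇f(x_t)‖²`.
Convexity bounds the inner product below by `f(x_t) − f*`, and the choice of `η` turns
`η²‖∇f(x_t)‖²` into `η (f(x_t) − l*)/√T = η (f(x_t) − f*)/√T + η σ²/√T`; since `√T ≥ 1` the
first of these is absorbed by one of the two copies of `η (f(x_t) − f*)`.
-/

open Set RealInnerProductSpace

theorem ConvexOn.add_fderiv_sub_le {E : Type*} [NormedAddCommGroup E] [NormedSpace ℝ E]
    {s : Set E} {f : E → ℝ} {f' : E →L[ℝ] ℝ} {x y : E} (hf : ConvexOn ℝ s f)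
    (hx : x ∈ s) (hy : y ∈ s) (hf' : HasFDerivAt f f' x) :
    f x + f' (y - x) ≤ f y := by
  set L : ℝ →ᵃ[ℝ] E := AffineMap.lineMap x y
  have hL0 : L 0 = x := AffineMap.lineMap_apply_zero x y
  have hL1 : L 1 = y := AffineMap.lineMap_apply_one x y
  have hline : ConvexOn ℝ (L ⁻¹' s) (f ∘ L) := hf.comp_affineMap L
  have hderiv : HasDerivAt (f ∘ L) (f' (y - x)) 0 := by
    refine HasFDerivAt.comp_hasDerivAt (0 : ℝ) ?_ AffineMap.hasDerivAt_lineMap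
    rwa [hL0]
  have hslope := hline.le_slope_of_hasDerivAt (by simpa [hL0] using hx)
    (by simpa [hL1] using hy) one_pos hderiv
  simp only [slope_def_field, Function.comp_apply, hL0, hL1, sub_zero, div_one] at hslope
  linarith

theorem ConvexOn.sub_le_inner_gradient {F : Type*} [NormedAddCommGroup F]
    [InnerProductSpace ℝ F] [CompleteSpace F] {f : F → ℝ} {x : F} (hf : ConvexOn ℝ univ f)
    (hfx : DifferentiableAt ℝ f x) (y : F) :
    f x - f y ≤ ⟪gradient f x, x - y⟫ := by
  have h := hf.add_fderiv_sub_le (mem_univ x) (mem_univ y) hfx.hasGradientAt.hasFDerivAt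
  rw [InnerProductSpace.toDual_apply_apply, ← neg_sub x y, inner_neg_right] at h
  linarith

theorem norm_sub_smul_sub_sq {F : Type*} [NormedAddCommGroup F] [InnerProductSpace ℝ F]
    (x y g : F) (η : ℝ) :
    ‖x - η • g - y‖ ^ 2 = ‖x - y‖ ^ 2 - 2 * η * ⟪g, x - y⟫ + η ^ 2 * ‖g‖ ^ 2 := by
  rw [sub_right_comm, norm_sub_sq_real, real_inner_smul_right, real_inner_comm, norm_smul,
    Real.norm_eq_abs, mul_pow, sq_abs]
  ring

/-- One step of Inexact Polyak Stepsize satisfies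
`‖x_{t+1} − x*‖² ≤ ‖x_t − x*‖² − η_t(f(x_t) − f*) + η_t σ²/√T` where `σ² = f* − l*`. -/
theorem inexact_polyak_one_step {d : ℕ}
    (f : EuclideanSpace ℝ (Fin d) → ℝ)
    (hdiff : Differentiable ℝ f)
    (hconv : ConvexOn ℝ Set.univ f)
    (xstar : EuclideanSpace ℝ (Fin d)) (hmin : ∀ y, f xstar ≤ f y)
    (lstar : ℝ) (hlstar : lstar ≤ f xstar)
    (T : ℕ) (hT : 1 ≤ T)
    (xt xt1 : EuclideanSpace ℝ (Fin d))
    (hgrad : gradient f xt ≠ 0)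
    (η : ℝ) (hη : η = (f xt - lstar) / (Real.sqrt T * ‖gradient f xt‖ ^ 2))
    (hstep : xt1 = xt - η • gradient f xt) :
    ‖xt1 - xstar‖ ^ 2 ≤ ‖xt - xstar‖ ^ 2 - η * (f xt - f xstar) +
      η * (f xstar - lstar) / Real.sqrt T := by
  have hsqrt : 1 ≤ Real.sqrt T := Real.one_le_sqrt.2 (by exact_mod_cast hT)
  have hgap : 0 ≤ f xt - f xstar := sub_nonneg.2 (hmin xt)
  have hη_nonneg : 0 ≤ η := hη ▸ div_nonneg (by linarith) (by positivity)
  have hinner : f xt - f xstar ≤ ⟪gradient f xt, xt - xstar⟫ :=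
    hconv.sub_le_inner_gradient (hdiff xt) xstar
  have hη_sq : η ^ 2 * ‖gradient f xt‖ ^ 2 = η * (f xt - lstar) / Real.sqrt T := by
    have : ‖gradient f xt‖ ≠ 0 := norm_ne_zero_iff.2 hgrad
    rw [hη]
    field_simp
  have hdamp : η * (f xt - f xstar) / Real.sqrt T ≤ η * (f xt - f xstar) :=
    div_le_self (mul_nonneg hη_nonneg hgap) hsqrt
  have hsplit : η * (f xt - lstar) / Real.sqrt T =
      η * (f xt - f xstar) / Real.sqrt T + η * (f xstar - lstar) / Real.sqrt T := by ring
  rw [hstep, norm_sub_smul_sub_sq, hη_sq]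
  linarith [mul_le_mul_of_nonneg_left hinner hη_nonneg]
end

section
/- There exists an absolute constant C > 0 such that the following holds. Let f : ℝ^d → ℝ be differentiable, convex, and L-smooth with L > 0, and suppose f attains its minimum at x* with f* = f(x*). Let T ≥ 1 and let the sequence (x_t)_{t=0,...,T} be generated by gradient descent with Polyak stepsize: x_{t+1} = x_t − η_t ∇f(x_t) with η_t = (f(x_t) − f*)/‖∇f(x_t)‖² (where ∇f(x_t) ≠ 0 for all t < T). Then with x̄ = (1/T) Σ_{t=0}^{T−1} x_t, f(x̄) − f* ≤ C · L ‖x_0 − x*‖² / T. -/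
/-!
Convexity gives `f xₜ - f* ≤ ⟪∇f xₜ, xₜ - x*⟫`, so the Polyak step decreases `‖xₜ - x*‖²` by at
least `(f xₜ - f*)² / ‖∇f xₜ‖²`, while smoothness (the descent lemma at `xₜ - ∇f xₜ / L`) gives
`‖∇f xₜ‖² ≤ 2L (f xₜ - f*)`. Hence every step decreases `‖xₜ - x*‖²` by at least
`(f xₜ - f*) / (2L)`; telescoping and Jensen's inequality for the average give the bound with
`C = 2`.
-/

open AffineMap Finset
open scoped RealInnerProductSpace

section GradientInequalities

variable {E : Type*} [NormedAddCommGroup E] [InnerProductSpace ℝ E] [CompleteSpace E]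
  {f : E → ℝ}

theorem hasDerivAt_comp_lineMap {x y : E} {s : ℝ} (hf : DifferentiableAt ℝ f (lineMap x y s)) :
    HasDerivAt (fun r : ℝ => f (lineMap x y r)) ⟪gradient f (lineMap x y s), y - x⟫ s := by
  have h := hf.hasGradientAt.hasFDerivAt.comp_hasDerivAt s hasDerivAt_lineMap
  rw [InnerProductSpace.toDual_apply_apply] at h
  exact h

theorem ConvexOn.add_inner_gradient_le (hconv : ConvexOn ℝ Set.univ f)
    {x : E} (hf : DifferentiableAt ℝ f x) (y : E) :
    f x + ⟪gradient f x, y - x⟫ ≤ f y := by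
  have hderiv : HasDerivAt (fun r : ℝ => f (lineMap x y r)) ⟪gradient f x, y - x⟫ 0 := by
    simpa using hasDerivAt_comp_lineMap (x := x) (y := y) (s := 0) (by simpa using hf)
  have := (hconv.comp_affineMap (lineMap x y)).le_slope_of_hasDerivAt trivial trivial one_pos hderiv
  simp only [slope_def_field, Function.comp_def, lineMap_apply_zero, lineMap_apply_one,
    sub_zero, div_one] at this
  linarith

theorem le_add_inner_gradient_add_of_lipschitz {L : ℝ} (hf : Differentiable ℝ f)
    (hlip : ∀ x y, ‖gradient f x - gradient f y‖ ≤ L * ‖x - y‖) (x y : E) :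
    f y ≤ f x + ⟪gradient f x, y - x⟫ + L / 2 * ‖y - x‖ ^ 2 := by
  set φ : ℝ → ℝ := fun r => f (lineMap x y r)
  set B : ℝ → ℝ := fun r => f x + r * ⟪gradient f x, y - x⟫ + L / 2 * r ^ 2 * ‖y - x‖ ^ 2
  have hφ : ∀ r, HasDerivAt φ ⟪gradient f (lineMap x y r), y - x⟫ r :=
    fun r => hasDerivAt_comp_lineMap (hf _)
  have hB : ∀ r, HasDerivAt B (⟪gradient f x, y - x⟫ + L * r * ‖y - x‖ ^ 2) r := fun r =>
    ((((hasDerivAt_id' r).mul_const ⟪gradient f x, y - x⟫).const_add (f x)).add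
      (((hasDerivAt_pow 2 r).const_mul (L / 2)).mul_const (‖y - x‖ ^ 2))).congr_deriv
      (by push_cast; ring)
  have hbound : ∀ r ∈ Set.Ico (0 : ℝ) 1,
      ⟪gradient f (lineMap x y r), y - x⟫ ≤ ⟪gradient f x, y - x⟫ + L * r * ‖y - x‖ ^ 2 := by
    rintro r ⟨hr, -⟩
    have hdist : ‖lineMap x y r - x‖ = r * ‖y - x‖ := by
      rw [← vsub_eq_sub, lineMap_vsub_left, norm_smul, Real.norm_of_nonneg hr, vsub_eq_sub]
    calc ⟪gradient f (lineMap x y r), y - x⟫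
        = ⟪gradient f x, y - x⟫ + ⟪gradient f (lineMap x y r) - gradient f x, y - x⟫ := by
          rw [inner_sub_left]; ring
      _ ≤ ⟪gradient f x, y - x⟫ + L * (r * ‖y - x‖) * ‖y - x‖ := by
          grw [real_inner_le_norm (gradient f (lineMap x y r) - gradient f x), hlip, hdist]
      _ = _ := by ring
  have := image_le_of_deriv_right_le_deriv_boundary (a := 0) (b := 1) (f := φ) (B := B)
    (fun r _ => (hφ r).continuousAt.continuousWithinAt) (fun r _ => (hφ r).hasDerivWithinAt)
    (by simp [φ, B]) (fun r _ => (hB r).continuousAt.continuousWithinAt)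
    (fun r _ => (hB r).hasDerivWithinAt) hbound (Set.right_mem_Icc.2 zero_le_one)
  simpa [φ, B] using this

theorem sq_norm_gradient_le_of_lipschitz {L : ℝ} (hL : 0 < L) (hf : Differentiable ℝ f)
    (hlip : ∀ x y, ‖gradient f x - gradient f y‖ ≤ L * ‖x - y‖) {xstar : E}
    (hmin : ∀ y, f xstar ≤ f y) (x : E) :
    ‖gradient f x‖ ^ 2 ≤ 2 * L * (f x - f xstar) := by
  have hdescent := le_add_inner_gradient_add_of_lipschitz hf hlip x (x - L⁻¹ • gradient f x)
  rw [sub_sub_cancel_left, inner_neg_right, real_inner_smul_right, real_inner_self_eq_norm_sq,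
    norm_neg, norm_smul, Real.norm_of_nonneg (inv_nonneg.2 hL.le)] at hdescent
  have hL' : L ≠ 0 := hL.ne'
  have := (hmin _).trans hdescent
  field_simp at this
  nlinarith

end GradientInequalities

section PolyakStep

variable {E : Type*} [NormedAddCommGroup E] [InnerProductSpace ℝ E]

theorem norm_sub_div_smul_sq_add_le {u g : E} {a : ℝ} (ha : 0 ≤ a) (hau : a ≤ ⟪g, u⟫) :
    ‖u - (a / ‖g‖ ^ 2) • g‖ ^ 2 + a ^ 2 / ‖g‖ ^ 2 ≤ ‖u‖ ^ 2 := by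
  rcases eq_or_ne g 0 with rfl | hg
  · simp
  have hg2 : 0 < ‖g‖ ^ 2 := by positivity
  rw [norm_sub_sq_real, real_inner_smul_right, norm_smul, Real.norm_eq_abs, mul_pow, sq_abs,
    real_inner_comm]
  have : a ^ 2 / ‖g‖ ^ 2 ≤ a / ‖g‖ ^ 2 * ⟪g, u⟫ := by
    rw [div_mul_eq_mul_div, sq]
    gcongr
  field_simp at this ⊢
  nlinarith

variable [CompleteSpace E]

noncomputable def polyakStep (f : E → ℝ) (fstar : ℝ) (x : E) : E :=
  x - ((f x - fstar) / ‖gradient f x‖ ^ 2) • gradient f x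

theorem div_le_sq_norm_sub_sq_norm_polyakStep_sub {f : E → ℝ} {L : ℝ} (hL : 0 < L)
    (hf : Differentiable ℝ f) (hconv : ConvexOn ℝ Set.univ f)
    (hlip : ∀ x y, ‖gradient f x - gradient f y‖ ≤ L * ‖x - y‖) {xstar : E}
    (hmin : ∀ y, f xstar ≤ f y) {x : E} (hx : gradient f x ≠ 0) :
    (f x - f xstar) / (2 * L) ≤ ‖x - xstar‖ ^ 2 - ‖polyakStep f (f xstar) x - xstar‖ ^ 2 := by
  have hgap : f x - f xstar ≤ ⟪gradient f x, x - xstar⟫ := by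
    have := hconv.add_inner_gradient_le (hf x) xstar
    rw [← neg_sub, inner_neg_right] at this
    linarith
  have hstep := norm_sub_div_smul_sq_add_le (sub_nonneg.2 (hmin x)) hgap
  rw [polyakStep, sub_right_comm]
  have hgrad := sq_norm_gradient_le_of_lipschitz hL hf hlip hmin x
  have : (f x - f xstar) / (2 * L) ≤ (f x - f xstar) ^ 2 / ‖gradient f x‖ ^ 2 := by
    rw [div_le_div_iff₀ (by positivity) (by positivity)]
    nlinarith [hmin x]
  linarith

end PolyakStep

theorem Finset.sum_range_le_of_le_sub_succ {a R : ℕ → ℝ} {T : ℕ}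
    (h : ∀ t < T, a t ≤ R t - R (t + 1)) (hT : 0 ≤ R T) :
    ∑ t ∈ range T, a t ≤ R 0 := by
  have := sum_le_sum fun t ht => h t (mem_range.1 ht)
  rw [sum_range_sub'] at this
  linarith

theorem ConvexOn.map_inv_card_smul_sum_le {E : Type*} [AddCommGroup E] [Module ℝ E] {D : Set E}
    {f : E → ℝ} (hf : ConvexOn ℝ D f) {ι : Type*} {s : Finset ι} (hs : s.Nonempty) {p : ι → E}
    (hp : ∀ i ∈ s, p i ∈ D) :
    f ((#s : ℝ)⁻¹ • ∑ i ∈ s, p i) ≤ (#s : ℝ)⁻¹ * ∑ i ∈ s, f (p i) := by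
  have hs' : (#s : ℝ) ≠ 0 := by exact_mod_cast hs.card_pos.ne'
  have := hf.map_sum_le (t := s) (w := fun _ => (#s : ℝ)⁻¹) (p := p) (fun _ _ => by positivity)
    (by simp [hs']) hp
  simpa only [← smul_sum, ← mul_sum, smul_eq_mul] using this

/-- There exists an absolute constant `C > 0` such that gradient descent
with Polyak stepsize on a convex L-smooth function satisfies
`f(x̄) − f* ≤ C·L‖x_0 − x*‖²/T`. -/
theorem polyak_stepsize_convergence_smooth :
    ∃ C > (0 : ℝ), ∀ (d : ℕ)
      (f : EuclideanSpace ℝ (Fin d) → ℝ) (L : ℝ),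
      0 < L →
      Differentiable ℝ f →
      ConvexOn ℝ Set.univ f →
      (∀ x y : EuclideanSpace ℝ (Fin d),
        ‖gradient f x - gradient f y‖ ≤ L * ‖x - y‖) →
      ∀ (xstar : EuclideanSpace ℝ (Fin d)), (∀ y, f xstar ≤ f y) →
      ∀ (T : ℕ), 1 ≤ T →
      ∀ (x : ℕ → EuclideanSpace ℝ (Fin d)),
      (∀ t < T, gradient f (x t) ≠ 0) →
      (∀ t < T, x (t + 1) = x t -
        ((f (x t) - f xstar) / ‖gradient f (x t)‖ ^ 2) • gradient f (x t)) →
      f ((T : ℝ)⁻¹ • ∑ t ∈ Finset.range T, x t) - f xstar ≤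
        C * L * ‖x 0 - xstar‖ ^ 2 / T := by
  refine ⟨2, two_pos, fun d f L hL hf hconv hlip xstar hmin T hT x hgrad hstep => ?_⟩
  have hsum : ∑ t ∈ range T, (f (x t) - f xstar) / (2 * L) ≤ ‖x 0 - xstar‖ ^ 2 := by
    refine sum_range_le_of_le_sub_succ (R := fun t => ‖x t - xstar‖ ^ 2) (fun t ht => ?_)
      (by positivity)
    rw [hstep t ht]
    exact div_le_sq_norm_sub_sq_norm_polyakStep_sub hL hf hconv hlip hmin (hgrad t ht)
  have hjensen := hconv.map_inv_card_smul_sum_le ⟨0, mem_range.2 hT⟩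
    (fun t _ => Set.mem_univ (x t))
  rw [card_range] at hjensen
  have hT' : (0 : ℝ) < T := by exact_mod_cast hT
  rw [← sum_div, sum_sub_distrib, sum_const, card_range, nsmul_eq_mul,
    div_le_iff₀ (by positivity)] at hsum
  rw [le_div_iff₀ hT']
  calc (f ((T : ℝ)⁻¹ • ∑ t ∈ range T, x t) - f xstar) * T
      ≤ ((T : ℝ)⁻¹ * ∑ t ∈ range T, f (x t) - f xstar) * T := by gcongr
    _ = ∑ t ∈ range T, f (x t) - T * f xstar := by field_simp
    _ ≤ 2 * L * ‖x 0 - xstar‖ ^ 2 := by linarith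
end
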